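/- Let (M, F) be a Rund Kähler-Finsler-like manifold. Then √−1 ∂_H ∂̄_H ω_H = G_{γλ̄} S^γ_{αμ} conj(S^λ_{βν}) dz^α ∧ dz^μ ∧ dz̄^β ∧ dz̄^ν; in particular √−1 ∂_H ∂̄_H ω_H is a globally defined nonnegative horizontal (2,2)-form on PM̃ which vanishes if and only if F is a Kähler-Finsler metric. -/

import Mathlib

/-!
A local-coordinate formalization of strongly pseudoconvex complex Finsler metrics,
following Abate–Patrizio and Munteanu.  A point of the (slit) holomorphic tangent
bundle `M̃ = T^{1,0}M ∖ {0}` is represented in a holomorphic coordinate chart by a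
pair `(z, v) ∈ ℂⁿ × ℂⁿ`.  All derivatives are genuine Wirtinger derivatives
(expressed through `fderiv ℝ`), and all the tensors of the Chern–Finsler
connection `D`, the canonical connection `∇` of Munteanu and its extension `∇ᶜ`
are defined by their standard local-coordinate expressions.  Horizontal
`(p,q)`-forms on the projective tangent bundle `PM̃` are represented by their
(alternating, `0`-homogeneous) coefficient arrays, in the convention
`φ = (1/(p! q!)) φ_{I J̄} dz^I ∧ dz̄^J`.
The invariant integral `∫_{PM̃} · dμ_{PM̃}` (which exists when the base manifold
`M` is compact) is encoded by the structure `PTMIntegral`; a hypothesis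
`(vol : PTMIntegral F)` plays the role of the compactness of `M`.
-/

open ComplexConjugate BigOperators

noncomputable section

namespace CFG

/-- Points of the holomorphic tangent bundle in local coordinates: `(z, v)`. -/
abbrev Pt (n : ℕ) : Type := (Fin n → ℂ) × (Fin n → ℂ)

/-- The slit domain `M̃` : `v ≠ 0`. -/
def slit (n : ℕ) : Set (Pt n) := {p | p.2 ≠ 0}

variable {n : ℕ}

/-- Wirtinger derivative `∂/∂z^μ`. -/
def dz (μ : Fin n) (f : Pt n → ℂ) : Pt n → ℂ := fun p =>
  (1 / 2 : ℂ) * (fderiv ℝ f p (Pi.single μ 1, 0) -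
    Complex.I * fderiv ℝ f p (Pi.single μ Complex.I, 0))

/-- Wirtinger derivative `∂/∂z̄^μ`. -/
def dzb (μ : Fin n) (f : Pt n → ℂ) : Pt n → ℂ := fun p =>
  (1 / 2 : ℂ) * (fderiv ℝ f p (Pi.single μ 1, 0) +
    Complex.I * fderiv ℝ f p (Pi.single μ Complex.I, 0))

/-- Wirtinger derivative `∂/∂v^μ`. -/
def dv (μ : Fin n) (f : Pt n → ℂ) : Pt n → ℂ := fun p =>
  (1 / 2 : ℂ) * (fderiv ℝ f p (0, Pi.single μ 1) -
    Complex.I * fderiv ℝ f p (0, Pi.single μ Complex.I))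

/-- Wirtinger derivative `∂/∂v̄^μ`. -/
def dvb (μ : Fin n) (f : Pt n → ℂ) : Pt n → ℂ := fun p =>
  (1 / 2 : ℂ) * (fderiv ℝ f p (0, Pi.single μ 1) +
    Complex.I * fderiv ℝ f p (0, Pi.single μ Complex.I))

/-- Wirtinger derivative `∂/∂z^μ` for functions on the base manifold. -/
def bdz (μ : Fin n) (f : (Fin n → ℂ) → ℂ) : (Fin n → ℂ) → ℂ := fun z =>
  (1 / 2 : ℂ) * (fderiv ℝ f z (Pi.single μ 1) -
    Complex.I * fderiv ℝ f z (Pi.single μ Complex.I))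

/-- Wirtinger derivative `∂/∂z̄^μ` for functions on the base manifold. -/
def bdzb (μ : Fin n) (f : (Fin n → ℂ) → ℂ) : (Fin n → ℂ) → ℂ := fun z =>
  (1 / 2 : ℂ) * (fderiv ℝ f z (Pi.single μ 1) +
    Complex.I * fderiv ℝ f z (Pi.single μ Complex.I))

/-- A real function viewed as a complex-valued one. -/
def cplx (G : Pt n → ℝ) : Pt n → ℂ := fun p => (G p : ℂ)

/-- Levi matrix entry `G_{αβ̄} = ∂²G/∂v^α ∂v̄^β`. -/
def levi (G : Pt n → ℝ) (α β : Fin n) : Pt n → ℂ := dv α (dvb β (cplx G))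

/-- The coefficient array of a horizontal `(p,q)`-form, in the convention
`φ = (1/(p! q!)) φ_{α₁⋯αₚ β̄₁⋯β̄__q} dz^{α₁} ∧ ⋯ ∧ dz̄^{β_q}`. -/
abbrev HForm (n p q : ℕ) : Type := (Fin p → Fin n) → (Fin q → Fin n) → Pt n → ℂ

/-- The sign of a permutation, as a complex number. -/
def permSign {m : ℕ} (σ : Equiv.Perm (Fin m)) : ℂ := ((Equiv.Perm.sign σ : ℤ) : ℂ)

/-- The positive `(1,1)`-form `√-1 α ∧ ᾱ` built from the `(1,0)`-covector
`α = a_μ dz^μ`. -/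
def oneone (a : Fin n → ℂ) : HForm n 1 1 := fun I J _ =>
  Complex.I * a (I 0) * conj (a (J 0))

/-- Wedge product of horizontal forms (coefficient arrays, shuffle formula). -/
def wedge {p q p' q' : ℕ} (φ : HForm n p q) (ψ : HForm n p' q') :
    HForm n (p + p') (q + q') := fun I J x =>
  (((p.factorial * p'.factorial * q.factorial * q'.factorial : ℕ) : ℂ))⁻¹ *
    ∑ σ : Equiv.Perm (Fin (p + p')), ∑ τ : Equiv.Perm (Fin (q + q')),
      permSign σ * permSign τ *
        (φ (fun i => I (σ (Fin.castAdd p' i))) (fun j => J (τ (Fin.castAdd q' j))) x *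
          ψ (fun i => I (σ (Fin.natAdd p i))) (fun j => J (τ (Fin.natAdd q j))) x)

/-- The density of a top-degree `(n,n)` horizontal form with respect to the
positive volume form `√-1^{n²} dz^1 ∧ ⋯ ∧ dz^n ∧ dz̄^1 ∧ ⋯ ∧ dz̄^n`. -/
def topVal {m : ℕ} (Φ : HForm n m m) (h : m ≤ n) : Pt n → ℂ := fun x =>
  Φ (fun j => Fin.castLE h j) (fun j => Fin.castLE h j) x / Complex.I ^ (n ^ 2)

/-- `φ` is (the coefficient array of) a smooth horizontal `(p,q)`-form on `PM̃`:
it is alternating in each group of indices, smooth on the slit bundle, and its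
coefficients are `0`-homogeneous with respect to the fibre coordinate `v`. -/
def IsHorizontalForm {p q : ℕ} (φ : HForm n p q) : Prop :=
  (∀ (σ : Equiv.Perm (Fin p)) (I : Fin p → Fin n) (J : Fin q → Fin n) (x : Pt n),
      φ (I ∘ σ) J x = permSign σ * φ I J x) ∧
  (∀ (τ : Equiv.Perm (Fin q)) (I : Fin p → Fin n) (J : Fin q → Fin n) (x : Pt n),
      φ I (J ∘ τ) x = permSign τ * φ I J x) ∧
  (∀ I J, ContDiffOn ℝ (⊤ : ℕ∞) (φ I J) (slit n)) ∧
  (∀ I J (z v : Fin n → ℂ) (ζ : ℂ), ζ ≠ 0 → v ≠ 0 →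
      φ I J (z, ζ • v) = φ I J (z, v))

/-- A strongly pseudoconvex complex Finsler metric on (a chart of) `M`,
recorded through `G = F²`. -/
structure SPCF (n : ℕ) where
  /-- `G = F²`. -/
  G : Pt n → ℝ
  contG : Continuous G
  smoothG : ContDiffOn ℝ (⊤ : ℕ∞) G (slit n)
  posG : ∀ p ∈ slit n, 0 < G p
  /-- `F(z, ζv) = |ζ| F(z,v)`, i.e. `G(z, ζv) = |ζ|² G(z,v)`. -/
  homogG : ∀ (z v : Fin n → ℂ) (ζ : ℂ), G (z, ζ • v) = ‖ζ‖ ^ 2 * G (z, v)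
  /-- The Levi matrix `(G_{αβ̄})` is positive definite on the slit bundle. -/
  posdef : ∀ p ∈ slit n, ∀ w : Fin n → ℂ, w ≠ 0 →
    0 < (∑ α, ∑ β, levi G α β p * w α * conj (w β)).re ∧
      (∑ α, ∑ β, levi G α β p * w α * conj (w β)).im = 0

namespace SPCF

variable (F : SPCF n)

/-- `G` as a complex-valued function. -/
def Gc : Pt n → ℂ := cplx F.G

/-- The fundamental tensor `G_{αβ̄}`. -/
def Gm (α β : Fin n) : Pt n → ℂ := levi F.G α β

/-- The Levi matrix at a point. -/
def Levi (p : Pt n) : Matrix (Fin n) (Fin n) ℂ := Matrix.of fun α β => F.Gm α β p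

/-- The inverse metric: `Ginv λ α = G^{λ̄α}`, so that `∑ λ, G_{βλ̄} G^{λ̄α} = δ_β^α`. -/
def Ginv (l α : Fin n) : Pt n → ℂ := fun p => (F.Levi p)⁻¹ l α

/-- The Chern–Finsler nonlinear connection coefficients `Γ^α_{;μ} = G^{λ̄α} G_{λ̄;μ}`. -/
def Γ0 (α μ : Fin n) : Pt n → ℂ := fun p => ∑ l, F.Ginv l α p * dz μ (dvb l F.Gc) p

/-- The horizontal derivative `δ_μ = ∂_μ - Γ^α_{;μ} ∂̇_α`. -/
def δh (μ : Fin n) (f : Pt n → ℂ) : Pt n → ℂ := fun p =>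
  dz μ f p - ∑ α, F.Γ0 α μ p * dv α f p

/-- The conjugate horizontal derivative `δ_ν̄`. -/
def δhb (ν : Fin n) (f : Pt n → ℂ) : Pt n → ℂ := fun p =>
  dzb ν f p - ∑ α, conj (F.Γ0 α ν p) * dvb α f p

/-- The horizontal Chern–Finsler connection coefficients `Γ^α_{β;μ} = G^{λ̄α} δ_μ(G_{βλ̄})`. -/
def Γh (α β μ : Fin n) : Pt n → ℂ := fun p => ∑ l, F.Ginv l α p * F.δh μ (F.Gm β l) p

/-- `G_{αβ̄σ}`. -/
def Gm3 (α β σ : Fin n) : Pt n → ℂ := dv σ (F.Gm α β)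

/-- `G_{αβ̄τ̄}`. -/
def Gm3b (α β τ : Fin n) : Pt n → ℂ := dvb τ (F.Gm α β)

/-- The holomorphic sectional curvature tensor `Ω_{αβ̄;μν̄}` of the
Chern–Finsler connection `D`. -/
def Om (α β μ ν : Fin n) : Pt n → ℂ := fun p =>
  -F.δhb ν (F.δh μ (F.Gm α β)) p
  + (∑ l, ∑ k, F.δh μ (F.Gm α l) p * F.Ginv l k p * F.δhb ν (F.Gm k β) p)
  - ∑ σ, F.Gm3 α β σ p * F.δhb ν (F.Γ0 σ μ) p

/-- The canonical connection coefficients `L^α_{βμ}`. -/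
def Lh (α β μ : Fin n) : Pt n → ℂ := fun p =>
  (1 / 2 : ℂ) * ∑ l, F.Ginv l α p * (F.δh μ (F.Gm β l) p + F.δh β (F.Gm μ l) p)

/-- The canonical connection coefficients `L^α_{βμ̄}`. -/
def Lhb (α β μ : Fin n) : Pt n → ℂ := fun p =>
  (1 / 2 : ℂ) * ∑ l, F.Ginv l α p * (F.δhb μ (F.Gm β l) p - F.δhb l (F.Gm β μ) p)

/-- The holomorphic sectional curvature tensor `R_{αβ̄μν̄}` of Munteanu's
canonical connection `∇`, i.e.
`⟨∇_{δ_μ}∇_{δ_ν̄}δ_α - ∇_{δ_ν̄}∇_{δ_μ}δ_α - ∇_{[δ_μ,δ_ν̄]}δ_α, δ_β⟩`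
expressed in local coordinates. -/
def Rc (α β μ ν : Fin n) : Pt n → ℂ := fun p =>
  (∑ g, (F.δh μ (F.Lhb g α ν) p - F.δhb ν (F.Lh g α μ) p
      + ∑ σ, (F.Lhb σ α ν p * F.Lh g σ μ p - F.Lh σ α μ p * F.Lhb g σ ν p)) * F.Gm g β p)
  - ∑ σ, F.Gm3 α β σ p * F.δhb ν (F.Γ0 σ μ) p

/-- The holomorphic sectional curvature tensor `K_{αβ̄μν̄}` of the extension `∇ᶜ`
of the canonical connection to the complexified tangent bundle, in local
coordinates (the extra term, compared with `R_{αβ̄μν̄}`, comes from the mixed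
connection coefficients `L^α_{β̄μ} = L^α_{μβ̄}` and their conjugates). -/
def Kc (α β μ ν : Fin n) : Pt n → ℂ := fun p =>
  (∑ g, (F.δh μ (F.Lhb g α ν) p - F.δhb ν (F.Lh g α μ) p
      + ∑ σ, (F.Lhb σ α ν p * F.Lh g σ μ p
          + conj (F.Lhb σ ν α p) * F.Lhb g μ σ p
          - F.Lh σ α μ p * F.Lhb g σ ν p)) * F.Gm g β p)
  - ∑ σ, F.Gm3 α β σ p * F.δhb ν (F.Γ0 σ μ) p

/-- The horizontal torsion tensor `S^γ_{αβ} = ½(Γ^γ_{α;β} - Γ^γ_{β;α})`. -/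
def Sh (γ α β : Fin n) : Pt n → ℂ := fun p => (1 / 2 : ℂ) * (F.Γh γ α β p - F.Γh γ β α p)

/-- `S_α = ∑_γ S^γ_{αγ}`. -/
def S1 (α : Fin n) : Pt n → ℂ := fun p => ∑ γ, F.Sh γ α γ p

/-- `S_{αγλ̄} = ½(δ_γ(G_{αλ̄}) - δ_α(G_{γλ̄}))`. -/
def Shl (α γ l : Fin n) : Pt n → ℂ := fun p =>
  (1 / 2 : ℂ) * (F.δh γ (F.Gm α l) p - F.δh α (F.Gm γ l) p)

/-- The Ricci curvature `Ω_{μν̄} = G^{β̄α} Ω_{αβ̄;μν̄}` of the Chern–Finsler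
connection, so that `Ric_D = √-1 Ω_{μν̄} dz^μ ∧ dz̄^ν`. -/
def ricD (μ ν : Fin n) : Pt n → ℂ := fun p => ∑ α, ∑ β, F.Ginv β α p * F.Om α β μ ν p

/-- The Ricci curvature `R_{μν̄} = G^{β̄α} R_{αβ̄μν̄}` of the canonical connection. -/
def ricR (μ ν : Fin n) : Pt n → ℂ := fun p => ∑ α, ∑ β, F.Ginv β α p * F.Rc α β μ ν p

/-- The Ricci curvature `K_{μν̄} = G^{β̄α} K_{αβ̄μν̄}` of the connection `∇ᶜ`. -/
def ricK (μ ν : Fin n) : Pt n → ℂ := fun p => ∑ α, ∑ β, F.Ginv β α p * F.Kc α β μ ν p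

/-- The scalar curvature `s_D = G^{β̄α} G^{ν̄μ} Ω_{αβ̄;μν̄}`. -/
def sD : Pt n → ℂ := fun p => ∑ μ, ∑ ν, F.Ginv ν μ p * F.ricD μ ν p

/-- The scalar curvature `s_∇ = G^{β̄α} G^{ν̄μ} R_{αβ̄μν̄}`. -/
def sR : Pt n → ℂ := fun p => ∑ μ, ∑ ν, F.Ginv ν μ p * F.ricR μ ν p

/-- The scalar curvature `s_{∇ᶜ} = G^{β̄α} G^{ν̄μ} K_{αβ̄μν̄}`. -/
def sK : Pt n → ℂ := fun p => ∑ μ, ∑ ν, F.Ginv ν μ p * F.ricK μ ν p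

/-- `(𝔖 ∘ 𝔖̄)_{μν̄} = G^{β̄α} G^{λ̄γ} S_{αγν̄} conj (S_{βλμ̄})`. -/
def SS (μ ν : Fin n) : Pt n → ℂ := fun p =>
  ∑ α, ∑ β, ∑ γ, ∑ l,
    F.Ginv β α p * F.Ginv l γ p * F.Shl α γ ν p * conj (F.Shl β l μ p)

/-- `⟨𝔖, 𝔖⟩ = G^{ν̄μ} (𝔖 ∘ 𝔖̄)_{μν̄}`. -/
def SnormSq : Pt n → ℂ := fun p => ∑ μ, ∑ ν, F.Ginv ν μ p * F.SS μ ν p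

/-- `F` is a Kähler-Finsler metric: `Γ^α_{β;μ} = Γ^α_{μ;β}`. -/
def IsKaehler : Prop := ∀ (α β μ : Fin n), ∀ p ∈ slit n, F.Γh α β μ p = F.Γh α μ β p

/-- `F` is a weakly Kähler-Finsler metric: `G_α (Γ^α_{β;μ} - Γ^α_{μ;β}) v^β = 0`. -/
def IsWeaklyKaehler : Prop := ∀ (μ : Fin n), ∀ p ∈ slit n,
  (∑ α, ∑ β, dv α F.Gc p * (F.Γh α β μ p - F.Γh α μ β p) * p.2 β) = 0

/-- The horizontal curvature `Ω̂^α_{β;μν̄} = -δ_ν̄(Γ^α_{β;μ})` of the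
complex Rund connection. -/
def RundCurv (α β μ ν : Fin n) : Pt n → ℂ := fun p => -F.δhb ν (F.Γh α β μ) p

/-- `F` is Rund Kähler-Finsler-like: `Ω̂^α_{β;μν̄} = Ω̂^α_{μ;βν̄}`. -/
def IsRundKL : Prop := ∀ (α β μ ν : Fin n), ∀ p ∈ slit n,
  F.RundCurv α β μ ν p = F.RundCurv α μ β ν p

/-- The holomorphic flag curvature `K_D(H)` of the Chern–Finsler connection
along the horizontal vector `H = H^α δ_α`. -/
def flagD (H : Fin n → ℂ) : Pt n → ℂ := fun p =>
  (∑ α, ∑ β, ∑ μ, ∑ ν, F.Om α β μ ν p * H α * conj (H β) * H μ * conj (H ν)) /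
    (∑ α, ∑ β, F.Gm α β p * H α * conj (H β)) ^ 2

/-- The holomorphic flag curvature `K_∇(H)` of the canonical connection. -/
def flagR (H : Fin n → ℂ) : Pt n → ℂ := fun p =>
  (∑ α, ∑ β, ∑ μ, ∑ ν, F.Rc α β μ ν p * H α * conj (H β) * H μ * conj (H ν)) /
    (∑ α, ∑ β, F.Gm α β p * H α * conj (H β)) ^ 2

/-- The holomorphic sectional curvature `K_D(v)` along `v`. -/
def holD : Pt n → ℂ := fun p =>
  (∑ α, ∑ β, ∑ μ, ∑ ν, F.Om α β μ ν p * p.2 α * conj (p.2 β) * p.2 μ * conj (p.2 ν)) /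
    (F.Gc p) ^ 2

/-- The holomorphic sectional curvature `K_∇(v)` along `v`. -/
def holR : Pt n → ℂ := fun p =>
  (∑ α, ∑ β, ∑ μ, ∑ ν, F.Rc α β μ ν p * p.2 α * conj (p.2 β) * p.2 μ * conj (p.2 ν)) /
    (F.Gc p) ^ 2

/-- The operator `∂_H` on horizontal `(p,q)`-forms. -/
def pH {p q : ℕ} (φ : HForm n p q) : HForm n (p + 1) q := fun I J x =>
  ∑ j : Fin (p + 1), (-1 : ℂ) ^ (j : ℕ) * F.δh (I j) (fun y => φ (I ∘ j.succAbove) J y) x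

/-- The operator `∂̄_H` on horizontal `(p,q)`-forms. -/
def pHbar {p q : ℕ} (φ : HForm n p q) : HForm n p (q + 1) := fun I J x =>
  (-1 : ℂ) ^ p *
    ∑ j : Fin (q + 1), (-1 : ℂ) ^ (j : ℕ) * F.δhb (J j) (fun y => φ I (J ∘ j.succAbove) y) x

/-- The horizontal fundamental form `ω_H = √-1 G_{αβ̄} dz^α ∧ dz̄^β`. -/
def omH : HForm n 1 1 := fun I J x => Complex.I * F.Gm (I 0) (J 0) x

/-- The wedge power `ω_H^k` (coefficient array in the `1/(k!k!)` convention). -/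
def omPow (k : ℕ) : HForm n k k := fun I J x =>
  Complex.I ^ k * (-1 : ℂ) ^ (k * (k - 1) / 2) * (k.factorial : ℂ) *
    ∑ σ : Equiv.Perm (Fin k), permSign σ * ∏ j, F.Gm (I j) (J (σ j)) x

/-- The pointwise Hermitian inner product `⟨·,·⟩_{PM̃}` on horizontal
`(p,q)`-forms induced by `(G_{αβ̄})`. -/
def hinner {p q : ℕ} (φ ψ : HForm n p q) : Pt n → ℂ := fun x =>
  (((p.factorial * q.factorial : ℕ) : ℂ))⁻¹ *
    ∑ I : Fin p → Fin n, ∑ J : Fin q → Fin n, ∑ I' : Fin p → Fin n, ∑ J' : Fin q → Fin n,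
      φ I J x * (∏ i, F.Ginv (I' i) (I i) x) * (∏ j, F.Ginv (J' j) (J j) x) *
        conj (ψ I' J' x)

/-- The `(0,1)`-form `∂_H^* ω_H = 2√-1 S_ᾱ dz̄^α`. -/
def pstarOmH : HForm n 0 1 := fun _ J x => 2 * Complex.I * conj (F.S1 (J 0) x)

/-- The `(1,0)`-form `∂̄_H^* ω_H = -2√-1 S_α dz^α`. -/
def pbarstarOmH : HForm n 1 0 := fun I _ x => -(2 * Complex.I) * F.S1 (I 0) x

/-- The horizontal `(1,0)`-form `𝒮 = S_α dz^α`. -/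
def SForm : HForm n 1 0 := fun I _ x => F.S1 (I 0) x

/-- `F` is a balanced complex Finsler metric: `d_H^* ω_H = 0`, i.e. both
`∂_H^* ω_H = 0` and `∂̄_H^* ω_H = 0`. -/
def IsBalanced : Prop :=
  (∀ (I : Fin 0 → Fin n) (J : Fin 1 → Fin n), ∀ x ∈ slit n, F.pstarOmH I J x = 0) ∧
  (∀ (I : Fin 1 → Fin n) (J : Fin 0 → Fin n), ∀ x ∈ slit n, F.pbarstarOmH I J x = 0)

end SPCF

/-- The invariant integral `∫_{PM̃} · dμ_{PM̃}` against the volume form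
`dμ_{PM̃} = ω_V^{n-1}/(n-1)! ∧ ω_H^n/n!` of a **compact** strongly pseudoconvex
complex Finsler manifold, applied to `0`-homogeneous functions on `M̃`
(i.e. functions on `PM̃`).  The existence of this structure encodes the
compactness of the base manifold `M`. -/
structure PTMIntegral {n : ℕ} (F : SPCF n) where
  integ : (Pt n → ℂ) → ℂ
  integ_add : ∀ f g : Pt n → ℂ, integ (fun x => f x + g x) = integ f + integ g
  integ_smul : ∀ (c : ℂ) (f : Pt n → ℂ), integ (fun x => c * f x) = c * integ f
  integ_conj : ∀ f : Pt n → ℂ, integ (fun x => conj (f x)) = conj (integ f)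
  integ_nonneg : ∀ f : Pt n → ℂ, (∀ x ∈ slit n, 0 ≤ (f x).re ∧ (f x).im = 0) →
    0 ≤ (integ f).re ∧ (integ f).im = 0
  integ_vanish : ∀ f : Pt n → ℂ, ContinuousOn f (slit n) →
    (∀ x ∈ slit n, 0 ≤ (f x).re ∧ (f x).im = 0) → integ f = 0 →
      ∀ x ∈ slit n, f x = 0

/-- `F̃ = e^{ρ/2} F` is a conformal change of `F` with smooth real factor `ρ`
on the base manifold, i.e. `G̃ = e^ρ G`. -/
def IsConformal (F Ft : SPCF n) (ρ : (Fin n → ℂ) → ℝ) : Prop :=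
  ContDiff ℝ (⊤ : ℕ∞) ρ ∧ ∀ p : Pt n, Ft.G p = Real.exp (ρ p.1) * F.G p

end CFG

namespace CFG
open ContDiff

variable {n : ℕ}

lemma slit_isOpen : IsOpen (slit n) :=
  isOpen_compl_singleton.preimage (continuous_snd : Continuous (Prod.snd : Pt n → _))

/-- generic Wirtinger-type operator -/
def wirt (c : ℂ) (w₁ w₂ : Pt n) (f : Pt n → ℂ) (p : Pt n) : ℂ :=
  (1 / 2 : ℂ) * (fderiv ℝ f p w₁ + c * fderiv ℝ f p w₂)

lemma dz_eq (μ : Fin n) (f : Pt n → ℂ) :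
    dz μ f = wirt (-Complex.I) (Pi.single μ 1, 0) (Pi.single μ Complex.I, 0) f := by
  funext p; simp only [dz, wirt]; ring

lemma dzb_eq (μ : Fin n) (f : Pt n → ℂ) :
    dzb μ f = wirt Complex.I (Pi.single μ 1, 0) (Pi.single μ Complex.I, 0) f := by
  funext p; simp only [dzb, wirt]

lemma dv_eq (μ : Fin n) (f : Pt n → ℂ) :
    dv μ f = wirt (-Complex.I) (0, Pi.single μ 1) (0, Pi.single μ Complex.I) f := by
  funext p; simp only [dv, wirt]; ring

lemma dvb_eq (μ : Fin n) (f : Pt n → ℂ) :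
    dvb μ f = wirt Complex.I (0, Pi.single μ 1) (0, Pi.single μ Complex.I) f := by
  funext p; simp only [dvb, wirt]

lemma wirt_congr {f g : Pt n → ℂ} {p : Pt n} (c : ℂ) (w₁ w₂ : Pt n)
    (h : f =ᶠ[nhds p] g) : wirt c w₁ w₂ f p = wirt c w₁ w₂ g p := by
  simp only [wirt, h.fderiv_eq]

lemma wirt_conj (c : ℂ) (w₁ w₂ : Pt n) (f : Pt n → ℂ) (p : Pt n) :
    (starRingEnd ℂ) (wirt c w₁ w₂ f p)
      = wirt ((starRingEnd ℂ) c) w₁ w₂ (fun x => (starRingEnd ℂ) (f x)) p := by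
  have h : fderiv ℝ (fun x => (starRingEnd ℂ) (f x)) p
      = (Complex.conjCLE : ℂ →L[ℝ] ℂ).comp (fderiv ℝ f p) :=
    Complex.conjCLE.comp_fderiv (f := f) (x := p)
  simp only [wirt, h, ContinuousLinearMap.coe_comp', Function.comp_apply,
    ContinuousLinearEquiv.coe_coe, Complex.conjCLE_apply, map_mul, map_add,
    map_div₀, map_one, map_ofNat, map_inv₀]

lemma wirt_add {f g : Pt n → ℂ} {p : Pt n} (c : ℂ) (w₁ w₂ : Pt n)
    (hf : DifferentiableAt ℝ f p) (hg : DifferentiableAt ℝ g p) :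
    wirt c w₁ w₂ (fun x => f x + g x) p = wirt c w₁ w₂ f p + wirt c w₁ w₂ g p := by
  simp only [wirt, fderiv_fun_add hf hg, ContinuousLinearMap.add_apply]; ring

lemma wirt_mul {f g : Pt n → ℂ} {p : Pt n} (c : ℂ) (w₁ w₂ : Pt n)
    (hf : DifferentiableAt ℝ f p) (hg : DifferentiableAt ℝ g p) :
    wirt c w₁ w₂ (fun x => f x * g x) p
      = f p * wirt c w₁ w₂ g p + g p * wirt c w₁ w₂ f p := by
  simp only [wirt, fderiv_fun_mul hf hg, ContinuousLinearMap.add_apply,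
    ContinuousLinearMap.smul_apply, smul_eq_mul]
  ring

lemma wirt_sum {ι : Type*} (s : Finset ι) {f : ι → Pt n → ℂ} {p : Pt n} (c : ℂ) (w₁ w₂ : Pt n)
    (hf : ∀ i ∈ s, DifferentiableAt ℝ (f i) p) :
    wirt c w₁ w₂ (fun x => ∑ i ∈ s, f i x) p = ∑ i ∈ s, wirt c w₁ w₂ (f i) p := by
  simp only [wirt, fderiv_fun_sum hf, ContinuousLinearMap.coe_sum', Finset.sum_apply]
  rw [Finset.mul_sum, ← Finset.sum_add_distrib, Finset.mul_sum]

lemma wirt_contDiffOn (c : ℂ) (w₁ w₂ : Pt n) {f : Pt n → ℂ}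
    (hf : ContDiffOn ℝ ∞ f (slit n)) :
    ContDiffOn ℝ ∞ (wirt c w₁ w₂ f) (slit n) := by
  have hD : ContDiffOn ℝ ∞ (fderiv ℝ f) (slit n) :=
    hf.fderiv_of_isOpen slit_isOpen (by simp)
  have h1 : ContDiffOn ℝ ∞ (fun p => fderiv ℝ f p w₁) (slit n) :=
    hD.clm_apply contDiffOn_const
  have h2 : ContDiffOn ℝ ∞ (fun p => fderiv ℝ f p w₂) (slit n) :=
    hD.clm_apply contDiffOn_const
  exact contDiffOn_const.mul (h1.add (contDiffOn_const.mul h2))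

lemma cdo_diffAt {f : Pt n → ℂ} (hf : ContDiffOn ℝ ∞ f (slit n)) {p : Pt n}
    (hp : p ∈ slit n) : DifferentiableAt ℝ f p :=
  (hf.contDiffAt (slit_isOpen.mem_nhds hp)).differentiableAt (by simp)

lemma contDiffOn_conj {f : Pt n → ℂ} (hf : ContDiffOn ℝ ∞ f (slit n)) :
    ContDiffOn ℝ ∞ (fun x => (starRingEnd ℂ) (f x)) (slit n) :=
  (Complex.conjCLE : ℂ →L[ℝ] ℂ).contDiff.comp_contDiffOn hf

end CFG

namespace CFG
open ContDiff ComplexConjugate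

variable {n : ℕ}

lemma sum2_bilin (M : Fin n → Fin n → ℂ) (u v : Fin n → ℂ) :
    ∑ α, ∑ β, M α β * (u α + v α) * (starRingEnd ℂ) (u β + v β)
      = (∑ α, ∑ β, M α β * u α * conj (u β)) + (∑ α, ∑ β, M α β * u α * conj (v β))
        + ((∑ α, ∑ β, M α β * v α * conj (u β)) + ∑ α, ∑ β, M α β * v α * conj (v β)) := by
  simp only [map_add, ← Finset.sum_add_distrib]
  exact Finset.sum_congr rfl fun α _ => Finset.sum_congr rfl fun β _ => by ring

lemma sum2_single (M : Fin n → Fin n → ℂ) (a b : Fin n) (c d : ℂ) :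
    ∑ α, ∑ β, M α β * (Pi.single a c : Fin n → ℂ) α
        * (starRingEnd ℂ) ((Pi.single b d : Fin n → ℂ) β)
      = c * (starRingEnd ℂ) d * M a b := by
  simp [Pi.single_apply, apply_ite (starRingEnd ℂ), mul_ite, ite_mul, Finset.sum_ite_eq']
  ring

namespace SPCF

variable (F : SPCF n)

lemma Gm_def (a b : Fin n) : F.Gm a b = levi F.G a b := rfl

lemma smooth_Gc : ContDiffOn ℝ ∞ F.Gc (slit n) :=
  Complex.ofRealCLM.contDiff.comp_contDiffOn (F.smoothG.of_le (by simp))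

lemma smooth_Gm (a b : Fin n) : ContDiffOn ℝ ∞ (F.Gm a b) (slit n) := by
  have : F.Gm a b = dv a (dvb b F.Gc) := rfl
  rw [this, dv_eq, dvb_eq]
  exact wirt_contDiffOn _ _ _ (wirt_contDiffOn _ _ _ F.smooth_Gc)

lemma herm {x : Pt n} (hx : x ∈ slit n) (a b : Fin n) :
    (starRingEnd ℂ) (F.Gm a b x) = F.Gm b a x := by
  have key : ∀ w : Fin n → ℂ, w ≠ 0 →
      (starRingEnd ℂ) (∑ α, ∑ β, F.Gm α β x * w α * conj (w β))
        = ∑ α, ∑ β, F.Gm α β x * w α * conj (w β) := fun w hw =>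
    Complex.conj_eq_iff_im.mpr (F.posdef x hx w hw).2
  have hone : (1 : ℂ) ≠ 0 := one_ne_zero
  have hsingle : ∀ (j : Fin n) (c : ℂ), c ≠ 0 → (Pi.single j c : Fin n → ℂ) ≠ 0 := by
    intro j c hc h
    have := congrFun h j
    simp [Pi.single_apply, hc] at this
  have hne1 : ((Pi.single a 1 : Fin n → ℂ) + (Pi.single b 1 : Fin n → ℂ)) ≠ 0 := by
    intro h
    have h2 := congrFun h a
    by_cases hab : a = b
    · subst hab
      simp [Pi.single_apply] at h2
    · simp [Pi.single_apply, hab] at h2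
  have hne2 : ((Pi.single a 1 : Fin n → ℂ) + (Pi.single b Complex.I : Fin n → ℂ)) ≠ 0 := by
    intro h
    have h2 := congrFun h a
    by_cases hab : a = b
    · subst hab
      simp [Pi.single_apply, Complex.ext_iff] at h2
    · simp [Pi.single_apply, hab] at h2
  have haa := key (Pi.single a 1) (hsingle a 1 hone)
  have hbb := key (Pi.single b 1) (hsingle b 1 hone)
  have hbbI := key (Pi.single b Complex.I) (hsingle b Complex.I Complex.I_ne_zero)
  have e1 := key _ hne1
  have e2 := key _ hne2
  simp only [Pi.add_apply, sum2_bilin, sum2_single] at e1 e2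
  simp only [sum2_single] at haa hbb hbbI
  simp only [map_add, map_mul, map_one, map_neg, Complex.conj_conj, Complex.conj_I,
    one_mul, mul_one, neg_mul, mul_neg, neg_neg] at e1 e2 haa hbb hbbI
  linear_combination (e1 - haa - hbb) / 2 - (Complex.I / 2) * (e2 - haa - hbbI)
    + (((starRingEnd ℂ) (F.Gm a b x) - (starRingEnd ℂ) (F.Gm b a x) + F.Gm a b x
        - F.Gm b a x) / 2) * Complex.I_mul_I

end SPCF
end CFG

namespace CFG
open ContDiff ComplexConjugate

variable {n : ℕ}

lemma contDiffOn_finset_prod {ι : Type*} (s : Finset ι) (f : ι → Pt n → ℂ)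
    (h : ∀ i ∈ s, ContDiffOn ℝ ∞ (f i) (slit n)) :
    ContDiffOn ℝ ∞ (fun p => ∏ i ∈ s, f i p) (slit n) := by
  classical
  induction s using Finset.induction_on with
  | empty => simpa using (contDiffOn_const : ContDiffOn ℝ ∞ (fun _ : Pt n => (1:ℂ)) (slit n))
  | insert _ _ ha ih =>
      rename_i a s
      simp only [Finset.prod_insert ha]
      exact (h a (Finset.mem_insert_self a s)).mul
        (ih fun i hi => h i (Finset.mem_insert_of_mem hi))

lemma contDiffOn_det (A : Pt n → Matrix (Fin n) (Fin n) ℂ)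
    (h : ∀ i j, ContDiffOn ℝ ∞ (fun p => A p i j) (slit n)) :
    ContDiffOn ℝ ∞ (fun p => (A p).det) (slit n) := by
  simp only [Matrix.det_apply]
  apply ContDiffOn.sum
  intro σ _
  simp only [Units.smul_def, zsmul_eq_mul]
  exact contDiffOn_const.mul (contDiffOn_finset_prod _ _ fun i _ => h (σ i) i)

lemma smooth_dz {f : Pt n → ℂ} (hf : ContDiffOn ℝ ∞ f (slit n)) (μ : Fin n) :
    ContDiffOn ℝ ∞ (dz μ f) (slit n) := by
  rw [dz_eq]; exact wirt_contDiffOn _ _ _ hf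

lemma smooth_dzb {f : Pt n → ℂ} (hf : ContDiffOn ℝ ∞ f (slit n)) (μ : Fin n) :
    ContDiffOn ℝ ∞ (dzb μ f) (slit n) := by
  rw [dzb_eq]; exact wirt_contDiffOn _ _ _ hf

lemma smooth_dv {f : Pt n → ℂ} (hf : ContDiffOn ℝ ∞ f (slit n)) (μ : Fin n) :
    ContDiffOn ℝ ∞ (dv μ f) (slit n) := by
  rw [dv_eq]; exact wirt_contDiffOn _ _ _ hf

lemma smooth_dvb {f : Pt n → ℂ} (hf : ContDiffOn ℝ ∞ f (slit n)) (μ : Fin n) :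
    ContDiffOn ℝ ∞ (dvb μ f) (slit n) := by
  rw [dvb_eq]; exact wirt_contDiffOn _ _ _ hf

namespace SPCF

variable (F : SPCF n)

lemma detNe {x : Pt n} (hx : x ∈ slit n) : (F.Levi x).det ≠ 0 := by
  intro h0
  obtain ⟨v, hv, hMv⟩ := (Matrix.exists_mulVec_eq_zero_iff).mpr h0
  set w : Fin n → ℂ := fun i => (starRingEnd ℂ) (v i) with hwdef
  have hw : w ≠ 0 := by
    intro h
    apply hv
    funext i
    have h2 := congrFun h i
    simpa [hwdef, map_eq_zero] using h2
  have hq := (F.posdef x hx w hw).1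
  have hzero : (∑ α, ∑ β, levi F.G α β x * w α * conj (w β)) = 0 := by
    have hrw : ∀ α, ∑ β, levi F.G α β x * w α * conj (w β)
        = (starRingEnd ℂ) (v α) * ((F.Levi x).mulVec v) α := by
      intro α
      simp only [Matrix.mulVec, dotProduct, Finset.mul_sum]
      refine Finset.sum_congr rfl fun β _ => ?_
      simp only [hwdef, Complex.conj_conj, SPCF.Levi, Matrix.of_apply]
      show levi F.G α β x * (starRingEnd ℂ) (v α) * v β
        = (starRingEnd ℂ) (v α) * (F.Gm α β x * v β)
      rw [Gm_def]; ring
    simp only [hrw, hMv]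
    simp
  rw [hzero] at hq
  simp at hq

lemma Ginv_Gm {x : Pt n} (hx : x ∈ slit n) (k l : Fin n) :
    ∑ σ, F.Ginv k σ x * F.Gm σ l x = if k = l then 1 else 0 := by
  have h := Matrix.nonsing_inv_mul (F.Levi x) (isUnit_iff_ne_zero.mpr (F.detNe hx))
  have h2 := congrFun (congrFun h k) l
  rw [Matrix.mul_apply] at h2
  simpa [Matrix.one_apply, SPCF.Ginv, SPCF.Levi] using h2

lemma smooth_det : ContDiffOn ℝ ∞ (fun p => (F.Levi p).det) (slit n) :=
  contDiffOn_det _ fun i j => F.smooth_Gm i j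

lemma smooth_Ginv (k l : Fin n) : ContDiffOn ℝ ∞ (F.Ginv k l) (slit n) := by
  have hrep : F.Ginv k l = fun p =>
      ((F.Levi p).det)⁻¹ * ((F.Levi p).updateRow l (Pi.single k 1)).det := by
    funext p
    show (F.Levi p)⁻¹ k l = _
    rw [Matrix.inv_def]
    simp [Matrix.smul_apply, Ring.inverse_eq_inv', smul_eq_mul, Matrix.adjugate_apply]
  rw [hrep]
  refine ContDiffOn.mul (ContDiffOn.inv F.smooth_det fun x hx => F.detNe hx) ?_
  apply contDiffOn_det
  intro i j
  by_cases hil : i = l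
  · simp only [Matrix.updateRow_apply, hil, if_pos rfl]
    exact contDiffOn_const
  · simp only [Matrix.updateRow_apply, if_neg hil]
    exact F.smooth_Gm i j

lemma smooth_Γ0 (a μ : Fin n) : ContDiffOn ℝ ∞ (F.Γ0 a μ) (slit n) :=
  ContDiffOn.sum fun l _ => (F.smooth_Ginv l a).mul (smooth_dz (smooth_dvb F.smooth_Gc l) μ)

lemma smooth_δh {f : Pt n → ℂ} (hf : ContDiffOn ℝ ∞ f (slit n)) (μ : Fin n) :
    ContDiffOn ℝ ∞ (F.δh μ f) (slit n) :=
  (smooth_dz hf μ).sub (ContDiffOn.sum fun a _ => (F.smooth_Γ0 a μ).mul (smooth_dv hf a))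

lemma smooth_δhb {f : Pt n → ℂ} (hf : ContDiffOn ℝ ∞ f (slit n)) (ν : Fin n) :
    ContDiffOn ℝ ∞ (F.δhb ν f) (slit n) :=
  (smooth_dzb hf ν).sub (ContDiffOn.sum fun a _ =>
    (contDiffOn_conj (F.smooth_Γ0 a ν)).mul (smooth_dvb hf a))

lemma smooth_Γh (a b μ : Fin n) : ContDiffOn ℝ ∞ (F.Γh a b μ) (slit n) :=
  ContDiffOn.sum fun l _ => (F.smooth_Ginv l a).mul (F.smooth_δh (F.smooth_Gm b l) μ)

end SPCF
end CFG

namespace CFG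
open ContDiff ComplexConjugate

variable {n : ℕ}

lemma wirt_const (c : ℂ) (w₁ w₂ : Pt n) (k : ℂ) (p : Pt n) :
    wirt c w₁ w₂ (fun _ => k) p = 0 := by
  simp [wirt, fderiv_const]

lemma sum_pull (c : ℂ) (g h : Fin n → ℂ) :
    ∑ a, g a * (c * h a) = c * ∑ a, g a * h a := by
  rw [Finset.mul_sum]; exact Finset.sum_congr rfl fun a _ => by ring

namespace SPCF

variable (F : SPCF n)

lemma δh_congr {f g : Pt n → ℂ} (h : ∀ y ∈ slit n, f y = g y) {x : Pt n}
    (hx : x ∈ slit n) (μ : Fin n) : F.δh μ f x = F.δh μ g x := by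
  have hev : f =ᶠ[nhds x] g := Filter.eventuallyEq_of_mem (slit_isOpen.mem_nhds hx) h
  simp only [SPCF.δh, dz_eq, dv_eq, wirt_congr _ _ _ hev]

lemma δhb_congr {f g : Pt n → ℂ} (h : ∀ y ∈ slit n, f y = g y) {x : Pt n}
    (hx : x ∈ slit n) (ν : Fin n) : F.δhb ν f x = F.δhb ν g x := by
  have hev : f =ᶠ[nhds x] g := Filter.eventuallyEq_of_mem (slit_isOpen.mem_nhds hx) h
  simp only [SPCF.δhb, dzb_eq, dvb_eq, wirt_congr _ _ _ hev]

lemma δh_add {f g : Pt n → ℂ} {x : Pt n} (hf : DifferentiableAt ℝ f x)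
    (hg : DifferentiableAt ℝ g x) (μ : Fin n) :
    F.δh μ (fun y => f y + g y) x = F.δh μ f x + F.δh μ g x := by
  simp only [SPCF.δh, dz_eq, dv_eq, wirt_add _ _ _ hf hg, mul_add, Finset.sum_add_distrib]
  ring

lemma δhb_add {f g : Pt n → ℂ} {x : Pt n} (hf : DifferentiableAt ℝ f x)
    (hg : DifferentiableAt ℝ g x) (ν : Fin n) :
    F.δhb ν (fun y => f y + g y) x = F.δhb ν f x + F.δhb ν g x := by
  simp only [SPCF.δhb, dzb_eq, dvb_eq, wirt_add _ _ _ hf hg, mul_add, Finset.sum_add_distrib]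
  ring

lemma δh_mul {f g : Pt n → ℂ} {x : Pt n} (hf : DifferentiableAt ℝ f x)
    (hg : DifferentiableAt ℝ g x) (μ : Fin n) :
    F.δh μ (fun y => f y * g y) x = f x * F.δh μ g x + g x * F.δh μ f x := by
  simp only [SPCF.δh, dz_eq, dv_eq, wirt_mul _ _ _ hf hg, mul_add, Finset.sum_add_distrib,
    sum_pull]
  ring

lemma δh_sum {ι : Type*} (s : Finset ι) {f : ι → Pt n → ℂ} {x : Pt n}
    (h : ∀ i ∈ s, DifferentiableAt ℝ (f i) x) (μ : Fin n) :
    F.δh μ (fun y => ∑ i ∈ s, f i y) x = ∑ i ∈ s, F.δh μ (f i) x := by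
  simp only [SPCF.δh, dz_eq, dv_eq, wirt_sum s _ _ _ h, Finset.mul_sum]
  rw [Finset.sum_comm, ← Finset.sum_sub_distrib]

lemma δh_const_mul {f : Pt n → ℂ} {x : Pt n} (hf : DifferentiableAt ℝ f x)
    (c : ℂ) (μ : Fin n) : F.δh μ (fun y => c * f y) x = c * F.δh μ f x := by
  simp only [SPCF.δh, dz_eq, dv_eq, wirt_mul _ _ _ (differentiableAt_const c) hf,
    wirt_const, mul_zero, add_zero, sum_pull]
  ring

lemma δhb_const_mul {f : Pt n → ℂ} {x : Pt n} (hf : DifferentiableAt ℝ f x)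
    (c : ℂ) (ν : Fin n) : F.δhb ν (fun y => c * f y) x = c * F.δhb ν f x := by
  simp only [SPCF.δhb, dzb_eq, dvb_eq, wirt_mul _ _ _ (differentiableAt_const c) hf,
    wirt_const, mul_zero, add_zero, sum_pull]
  ring

lemma conj_δh (f : Pt n → ℂ) (x : Pt n) (μ : Fin n) :
    (starRingEnd ℂ) (F.δh μ f x) = F.δhb μ (fun y => (starRingEnd ℂ) (f y)) x := by
  simp only [SPCF.δh, SPCF.δhb, dz_eq, dzb_eq, dv_eq, dvb_eq, map_sub, map_sum, map_mul,
    wirt_conj, map_neg, Complex.conj_I, neg_neg]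

lemma conj_δhb (f : Pt n → ℂ) (x : Pt n) (ν : Fin n) :
    (starRingEnd ℂ) (F.δhb ν f x) = F.δh ν (fun y => (starRingEnd ℂ) (f y)) x := by
  simp only [SPCF.δh, SPCF.δhb, dz_eq, dzb_eq, dv_eq, dvb_eq, map_sub, map_sum, map_mul,
    wirt_conj, Complex.conj_conj, Complex.conj_I]

lemma L1 {x : Pt n} (hx : x ∈ slit n) (b l μ : Fin n) :
    F.δh μ (F.Gm b l) x = ∑ σ, F.Gm σ l x * F.Γh σ b μ x := by
  have h1 : ∀ σ : Fin n, F.Gm σ l x * F.Γh σ b μ x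
      = ∑ k, (F.Ginv k σ x * F.Gm σ l x) * F.δh μ (F.Gm b k) x := by
    intro σ
    show F.Gm σ l x * (∑ k, F.Ginv k σ x * F.δh μ (F.Gm b k) x) = _
    rw [Finset.mul_sum]
    exact Finset.sum_congr rfl fun k _ => by ring
  rw [Finset.sum_congr rfl fun σ _ => h1 σ, Finset.sum_comm]
  have h2 : ∀ k : Fin n, ∑ σ, (F.Ginv k σ x * F.Gm σ l x) * F.δh μ (F.Gm b k) x
      = (if k = l then 1 else 0) * F.δh μ (F.Gm b k) x := by
    intro k
    rw [← Finset.sum_mul, F.Ginv_Gm hx k l]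
  rw [Finset.sum_congr rfl fun k _ => h2 k]
  simp [ite_mul, Finset.sum_ite_eq']

lemma L2 {x : Pt n} (hx : x ∈ slit n) (μ ν b : Fin n) :
    F.δhb b (F.Gm μ ν) x = ∑ σ, F.Gm μ σ x * (starRingEnd ℂ) (F.Γh σ ν b x) := by
  have h0 : F.δhb b (F.Gm μ ν) x = F.δhb b (fun y => (starRingEnd ℂ) (F.Gm ν μ y)) x :=
    F.δhb_congr (fun y hy => (F.herm hy ν μ).symm) hx b
  rw [h0, ← F.conj_δh (F.Gm ν μ) x b, F.L1 hx ν μ b, map_sum]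
  exact Finset.sum_congr rfl fun σ _ => by rw [map_mul, F.herm hx σ μ]

lemma L3 {x : Pt n} (hx : x ∈ slit n) (a b μ ν : Fin n) :
    F.δh a (F.δhb b (F.Gm μ ν)) x
      = ∑ σ, (F.Gm μ σ x * (starRingEnd ℂ) (F.δhb a (F.Γh σ ν b) x)
          + (starRingEnd ℂ) (F.Γh σ ν b x) * ∑ γ, F.Gm γ σ x * F.Γh γ μ a x) := by
  have h0 : F.δh a (F.δhb b (F.Gm μ ν)) x
      = F.δh a (fun y => ∑ σ, F.Gm μ σ y * (starRingEnd ℂ) (F.Γh σ ν b y)) x :=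
    F.δh_congr (fun y hy => F.L2 hy μ ν b) hx a
  rw [h0, F.δh_sum Finset.univ (f := fun σ y => F.Gm μ σ y * (starRingEnd ℂ) (F.Γh σ ν b y)) (fun σ _ => DifferentiableAt.mul
    (cdo_diffAt (F.smooth_Gm μ σ) hx)
    (cdo_diffAt (contDiffOn_conj (F.smooth_Γh σ ν b)) hx)) a]
  refine Finset.sum_congr rfl fun σ _ => ?_
  rw [F.δh_mul (cdo_diffAt (F.smooth_Gm μ σ) hx)
    (cdo_diffAt (contDiffOn_conj (F.smooth_Γh σ ν b)) hx) a,
    ← F.conj_δhb (F.Γh σ ν b) x a, F.L1 hx μ σ a]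

end SPCF
end CFG

namespace CFG
open ContDiff ComplexConjugate

variable {n : ℕ}

namespace SPCF

variable (F : SPCF n)

lemma Ecal (hRKL : F.IsRundKL) {x : Pt n} (hx : x ∈ slit n) (α μ β ν : Fin n) :
    F.δh α (F.δhb β (F.Gm μ ν)) x - F.δh α (F.δhb ν (F.Gm μ β)) x
      - F.δh μ (F.δhb β (F.Gm α ν)) x + F.δh μ (F.δhb ν (F.Gm α β)) x
      = 4 * ∑ γ, ∑ l, F.Gm γ l x * F.Sh γ α μ x * conj (F.Sh l β ν x) := by
  have hR : ∀ c σ : Fin n, F.δhb c (F.Γh σ β ν) x = F.δhb c (F.Γh σ ν β) x := by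
    intro c σ
    have h := hRKL σ β ν c x hx
    simpa [SPCF.RundCurv, neg_inj] using h
  rw [F.L3 hx α β μ ν, F.L3 hx α ν μ β, F.L3 hx μ β α ν, F.L3 hx μ ν α β]
  rw [← Finset.sum_sub_distrib, ← Finset.sum_sub_distrib, ← Finset.sum_add_distrib]
  have hrhs : (4:ℂ) * ∑ γ, ∑ l, F.Gm γ l x * F.Sh γ α μ x * conj (F.Sh l β ν x)
      = ∑ l, ∑ γ, 4 * (F.Gm γ l x * F.Sh γ α μ x * conj (F.Sh l β ν x)) := by
    rw [Finset.sum_comm, Finset.mul_sum]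
    exact Finset.sum_congr rfl fun l _ => by rw [Finset.mul_sum]
  rw [hrhs]
  refine Finset.sum_congr rfl fun σ _ => ?_
  rw [hR α σ, hR μ σ]
  have hexp : ∑ γ, 4 * (F.Gm γ σ x * F.Sh γ α μ x * conj (F.Sh σ β ν x))
      = 2 * conj (F.Sh σ β ν x) *
        ((∑ γ, F.Gm γ σ x * F.Γh γ α μ x) - ∑ γ, F.Gm γ σ x * F.Γh γ μ α x) := by
    rw [← Finset.sum_sub_distrib, Finset.mul_sum]
    refine Finset.sum_congr rfl fun γ _ => ?_
    simp only [SPCF.Sh]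
    ring
  rw [hexp]
  have hcs : conj (F.Sh σ β ν x)
      = (1/2 : ℂ) * (conj (F.Γh σ β ν x) - conj (F.Γh σ ν β x)) := by
    simp only [SPCF.Sh, map_mul, map_sub, map_div₀, map_one, map_ofNat]
  rw [hcs]
  ring

end SPCF
end CFG

namespace CFG
open ContDiff ComplexConjugate

variable {n : ℕ}

lemma sum6_comm (f : Fin n → Fin n → Fin n → Fin n → Fin n → Fin n → ℂ) :
    (∑ a, ∑ b, ∑ c, ∑ d, ∑ e, ∑ g, f a b c d e g)
      = ∑ e, ∑ g, ∑ a, ∑ b, ∑ c, ∑ d, f a b c d e g := by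
  have key : ∀ (k : Fin n → Fin n → Fin n → ℂ),
      (∑ x, ∑ e, ∑ g, k x e g) = ∑ e, ∑ g, ∑ x, k x e g := by
    intro k
    rw [Finset.sum_comm]
    exact Finset.sum_congr rfl fun e _ => Finset.sum_comm
  calc (∑ a, ∑ b, ∑ c, ∑ d, ∑ e, ∑ g, f a b c d e g)
      = ∑ a, ∑ b, ∑ c, ∑ e, ∑ g, ∑ d, f a b c d e g :=
        Finset.sum_congr rfl fun a _ => Finset.sum_congr rfl fun b _ =>
          Finset.sum_congr rfl fun c _ => key _
    _ = ∑ a, ∑ b, ∑ e, ∑ g, ∑ c, ∑ d, f a b c d e g :=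
        Finset.sum_congr rfl fun a _ => Finset.sum_congr rfl fun b _ => key _
    _ = ∑ a, ∑ e, ∑ g, ∑ b, ∑ c, ∑ d, f a b c d e g :=
        Finset.sum_congr rfl fun a _ => key _
    _ = ∑ e, ∑ g, ∑ a, ∑ b, ∑ c, ∑ d, f a b c d e g := key _

lemma sum4_comm (f : Fin n → Fin n → Fin n → Fin n → ℂ) :
    (∑ a, ∑ b, ∑ c, ∑ d, f a b c d) = ∑ c, ∑ d, ∑ a, ∑ b, f a b c d := by
  have key : ∀ (k : Fin n → Fin n → Fin n → ℂ),
      (∑ x, ∑ e, ∑ g, k x e g) = ∑ e, ∑ g, ∑ x, k x e g := by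
    intro k
    rw [Finset.sum_comm]
    exact Finset.sum_congr rfl fun e _ => Finset.sum_comm
  calc (∑ a, ∑ b, ∑ c, ∑ d, f a b c d)
      = ∑ a, ∑ c, ∑ d, ∑ b, f a b c d := Finset.sum_congr rfl fun a _ => key _
    _ = ∑ c, ∑ d, ∑ a, ∑ b, f a b c d := key _

lemma expand4 (A : ℂ) (S T : Fin n → Fin n → ℂ) :
    A * (∑ a, ∑ m, S a m) * (∑ b, ∑ v, T b v) = ∑ b, ∑ v, ∑ a, ∑ m, A * S a m * T b v := by
  rw [Finset.mul_sum]
  refine Finset.sum_congr rfl fun b _ => ?_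
  rw [Finset.mul_sum]
  refine Finset.sum_congr rfl fun v _ => ?_
  rw [Finset.mul_sum, Finset.sum_mul]
  refine Finset.sum_congr rfl fun a _ => ?_
  rw [Finset.mul_sum, Finset.sum_mul]

namespace SPCF

variable (F : SPCF n)

lemma δh_lin2 {f g : Pt n → ℂ} {x : Pt n} (hf : DifferentiableAt ℝ f x)
    (hg : DifferentiableAt ℝ g x) (c c' : ℂ) (μ : Fin n) :
    F.δh μ (fun y => c * f y + c' * g y) x = c * F.δh μ f x + c' * F.δh μ g x := by
  rw [F.δh_add (hf.const_mul c) (hg.const_mul c') μ, F.δh_const_mul hf c μ,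
    F.δh_const_mul hg c' μ]

lemma main1 (hRKL : F.IsRundKL) (α μ β ν : Fin n) (x : Pt n) (hx : x ∈ slit n) :
    Complex.I * F.pH (F.pHbar F.omH) ![α, μ] ![β, ν] x
      = 4 * ∑ γ, ∑ l, F.Gm γ l x * F.Sh γ α μ x * conj (F.Sh l β ν x) := by
  have hI0 : (![α, μ] : Fin 2 → Fin n) ∘ (0 : Fin 2).succAbove = ![μ] := by
    funext i; fin_cases i; rfl
  have hI1 : (![α, μ] : Fin 2 → Fin n) ∘ (1 : Fin 2).succAbove = ![α] := by
    funext i; fin_cases i; rfl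
  have hJ0 : (![β, ν] : Fin 2 → Fin n) ∘ (0 : Fin 2).succAbove = ![ν] := by
    funext i; fin_cases i; rfl
  have hJ1 : (![β, ν] : Fin 2 → Fin n) ∘ (1 : Fin 2).succAbove = ![β] := by
    funext i; fin_cases i; rfl
  have hψ : ∀ c : Fin n, (fun y => F.pHbar F.omH ![c] ![β, ν] y)
      = fun y => -(F.δhb β (fun z => Complex.I * F.Gm c ν z) y)
          + F.δhb ν (fun z => Complex.I * F.Gm c β z) y := by
    intro c
    funext y
    simp only [SPCF.pHbar, SPCF.omH, Fin.sum_univ_succ, Fin.sum_univ_zero, Fin.succ_zero_eq_one,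
      hJ0, hJ1, Matrix.cons_val_zero, Matrix.cons_val_one, Matrix.cons_val_succ,
      Matrix.head_cons, Fin.val_zero, Fin.val_one, Fin.val_succ, pow_zero, pow_one,
      add_zero, Fin.isValue]
    ring
  have hP : F.pH (F.pHbar F.omH) ![α, μ] ![β, ν] x
      = F.δh α (fun y => -(F.δhb β (fun z => Complex.I * F.Gm μ ν z) y)
            + F.δhb ν (fun z => Complex.I * F.Gm μ β z) y) x
        - F.δh μ (fun y => -(F.δhb β (fun z => Complex.I * F.Gm α ν z) y)
            + F.δhb ν (fun z => Complex.I * F.Gm α β z) y) x := by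
    simp only [SPCF.pH, Fin.sum_univ_succ, Fin.sum_univ_zero, Fin.succ_zero_eq_one,
      hI0, hI1, Matrix.cons_val_zero, Matrix.cons_val_one, Matrix.cons_val_succ,
      Matrix.head_cons, Fin.val_zero, Fin.val_one, Fin.val_succ, pow_zero, pow_one,
      add_zero, Fin.isValue, hψ]
    ring
  have hc : ∀ (b' a d : Fin n) (y : Pt n), y ∈ slit n →
      F.δhb b' (fun z => Complex.I * F.Gm a d z) y = Complex.I * F.δhb b' (F.Gm a d) y :=
    fun b' a d y hy => F.δhb_const_mul (cdo_diffAt (F.smooth_Gm a d) hy) Complex.I b'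
  have hsplit : ∀ e a : Fin n,
      F.δh e (fun y => -(F.δhb β (fun z => Complex.I * F.Gm a ν z) y)
          + F.δhb ν (fun z => Complex.I * F.Gm a β z) y) x
        = Complex.I * (F.δh e (F.δhb ν (F.Gm a β)) x - F.δh e (F.δhb β (F.Gm a ν)) x) := by
    intro e a
    have h1 : ∀ y ∈ slit n,
        (-(F.δhb β (fun z => Complex.I * F.Gm a ν z) y)
          + F.δhb ν (fun z => Complex.I * F.Gm a β z) y)
        = (-Complex.I) * F.δhb β (F.Gm a ν) y + Complex.I * F.δhb ν (F.Gm a β) y := by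
      intro y hy
      rw [hc β a ν y hy, hc ν a β y hy]
      ring
    rw [F.δh_congr h1 hx e,
      F.δh_lin2 (cdo_diffAt (F.smooth_δhb (F.smooth_Gm a ν) β) hx)
        (cdo_diffAt (F.smooth_δhb (F.smooth_Gm a β) ν) hx) (-Complex.I) Complex.I e]
    ring
  rw [hP, hsplit α μ, hsplit μ α]
  linear_combination F.Ecal hRKL hx α μ β ν
    + (F.δh α (F.δhb ν (F.Gm μ β)) x - F.δh α (F.δhb β (F.Gm μ ν)) x
        + F.δh μ (F.δhb β (F.Gm α ν)) x - F.δh μ (F.δhb ν (F.Gm α β)) x) * Complex.I_mul_I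

end SPCF
end CFG


open ComplexConjugate CFG

/-- formula (5.2).  For a Rund Kähler-Finsler-like manifold,
`√-1 ∂_H ∂̄_H ω_H = G_{γλ̄} S^γ_{αμ} conj (S^λ_{βν}) dz^α ∧ dz^μ ∧ dz̄^β ∧ dz̄^ν`.
(The right-hand side is written as a full sum over all indices; in the
`1/(p!q!)`-coefficient convention used for `HForm` its alternating coefficient
array is `2!·2! = 4` times the displayed antisymmetric tensor.)  In particular,
`√-1 ∂_H ∂̄_H ω_H` is a nonnegative horizontal `(2,2)`-form on `PM̃`, and it
vanishes if and only if `F` is a Kähler-Finsler metric. -/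
theorem statement10 {n : ℕ} (hn : 2 ≤ n) (F : SPCF n) (hRKL : F.IsRundKL) :
    (∀ (α μ β ν : Fin n), ∀ x ∈ slit n,
      Complex.I * F.pH (F.pHbar F.omH) ![α, μ] ![β, ν] x
        = 4 * ∑ γ, ∑ l, F.Gm γ l x * F.Sh γ α μ x * conj (F.Sh l β ν x)) ∧
    (∀ x ∈ slit n, ∀ w : Fin n → Fin n → ℂ,
      0 ≤ (∑ α, ∑ μ, ∑ β, ∑ ν,
            Complex.I * F.pH (F.pHbar F.omH) ![α, μ] ![β, ν] x
              * w α μ * conj (w β ν)).re ∧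
      (∑ α, ∑ μ, ∑ β, ∑ ν,
            Complex.I * F.pH (F.pHbar F.omH) ![α, μ] ![β, ν] x
              * w α μ * conj (w β ν)).im = 0) ∧
    ((∀ (α μ β ν : Fin n), ∀ x ∈ slit n,
        F.pH (F.pHbar F.omH) ![α, μ] ![β, ν] x = 0) ↔ F.IsKaehler) := by

  refine ⟨fun α μ β ν x hx => F.main1 hRKL α μ β ν x hx, ?_, ?_, ?_⟩
  · -- nonnegativity
    intro x hx w
    set u : Fin n → ℂ := fun γ => ∑ a, ∑ m, F.Sh γ a m x * w a m with hu
    have h1 : (∑ α, ∑ μ, ∑ β, ∑ ν,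
          Complex.I * F.pH (F.pHbar F.omH) ![α, μ] ![β, ν] x * w α μ * conj (w β ν))
        = ∑ α, ∑ μ, ∑ β, ∑ ν, ∑ γ, ∑ l,
            4 * (F.Gm γ l x * F.Sh γ α μ x * conj (F.Sh l β ν x)) * w α μ * conj (w β ν) := by
      refine Finset.sum_congr rfl fun α _ => Finset.sum_congr rfl fun μ _ =>
        Finset.sum_congr rfl fun β _ => Finset.sum_congr rfl fun ν _ => ?_
      rw [F.main1 hRKL α μ β ν x hx]
      simp only [Finset.mul_sum, Finset.sum_mul]
    have h2 : (∑ α, ∑ μ, ∑ β, ∑ ν, ∑ γ, ∑ l,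
          4 * (F.Gm γ l x * F.Sh γ α μ x * conj (F.Sh l β ν x)) * w α μ * conj (w β ν))
        = ∑ γ, ∑ l, ∑ α, ∑ μ, ∑ β, ∑ ν,
            4 * (F.Gm γ l x * F.Sh γ α μ x * conj (F.Sh l β ν x)) * w α μ * conj (w β ν) :=
      sum6_comm _
    have h3 : (∑ γ, ∑ l, ∑ α, ∑ μ, ∑ β, ∑ ν,
          4 * (F.Gm γ l x * F.Sh γ α μ x * conj (F.Sh l β ν x)) * w α μ * conj (w β ν))
        = 4 * ∑ γ, ∑ l, F.Gm γ l x * u γ * conj (u l) := by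
      rw [Finset.mul_sum]
      refine Finset.sum_congr rfl fun γ _ => ?_
      rw [Finset.mul_sum]
      refine Finset.sum_congr rfl fun l _ => ?_
      rw [sum4_comm (f := fun a m b v =>
        4 * (F.Gm γ l x * F.Sh γ a m x * conj (F.Sh l b v x)) * w a m * conj (w b v))]
      have hconj : conj (u l) = ∑ b, ∑ v, conj (F.Sh l b v x) * conj (w b v) := by
        simp only [hu, map_sum, map_mul]
      rw [show u γ = ∑ a, ∑ m, F.Sh γ a m x * w a m from rfl, hconj, expand4]
      simp only [Finset.mul_sum]
      refine Finset.sum_congr rfl fun b _ => Finset.sum_congr rfl fun v _ =>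
        Finset.sum_congr rfl fun a _ => Finset.sum_congr rfl fun m _ => by ring
    rw [h1, h2, h3]
    by_cases hu0 : u = 0
    · have hz : ∀ γ, u γ = 0 := fun γ => congrFun hu0 γ
      simp [hz]
    · have hpos := F.posdef x hx u hu0
      have hQ : (∑ γ, ∑ l, F.Gm γ l x * u γ * conj (u l))
          = ∑ a, ∑ b, levi F.G a b x * u a * conj (u b) := rfl
      rw [hQ]
      constructor
      · rw [show (4:ℂ) = ((4:ℝ):ℂ) by norm_num, Complex.re_ofReal_mul]
        exact mul_nonneg (by norm_num) hpos.1.le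
      · rw [show (4:ℂ) = ((4:ℝ):ℂ) by norm_num, Complex.im_ofReal_mul, hpos.2, mul_zero]
  · -- vanishing implies Kähler
    intro hvan a b m x hx
    by_contra hne
    set u : Fin n → ℂ := fun γ => F.Sh γ b m x with hu
    have hun : u ≠ 0 := by
      intro h0
      apply hne
      have h1 := congrFun h0 a
      simp only [hu, SPCF.Sh, Pi.zero_apply] at h1
      linear_combination 2 * h1
    have hmain := F.main1 hRKL b m b m x hx
    rw [hvan b m b m x hx, mul_zero] at hmain
    have hpos := F.posdef x hx u hun
    have hQ0 : (∑ a', ∑ b', levi F.G a' b' x * u a' * conj (u b')) = 0 := by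
      have h5 : (4:ℂ) * ∑ a', ∑ b', levi F.G a' b' x * u a' * conj (u b') = 0 := by
        rw [show (∑ a', ∑ b', levi F.G a' b' x * u a' * conj (u b'))
            = ∑ γ, ∑ l, F.Gm γ l x * F.Sh γ b m x * conj (F.Sh l b m x) from rfl]
        exact hmain.symm
      exact (mul_eq_zero.mp h5).resolve_left (by norm_num)
    rw [hQ0] at hpos
    simp at hpos
  · -- Kähler implies vanishing
    intro hK α μ β ν x hx
    have hS : ∀ (γ a m' : Fin n), F.Sh γ a m' x = 0 := by
      intro γ a m'
      have h := hK γ a m' x hx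
      simp [SPCF.Sh, h]
    have hmain := F.main1 hRKL α μ β ν x hx
    simp only [hS, mul_zero, zero_mul, map_zero, Finset.sum_const_zero] at hmain
    exact (mul_eq_zero.mp hmain).resolve_left Complex.I_ne_zero
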